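/- Let ζ > 0, ω ≥ 0, θ₀ > 0, and Ψ(t) = ζ|t|³t + ωt. Then for all ξ ∈ ℝ, (Ψ(ξ+θ₀) − Ψ(θ₀))·ξ ≥ (ζ/8)|ξ|⁵ + ω ξ². -/
import Mathlib

lemma key_mono (x y : ℝ) :
    (|x| ^ 3 * x - |y| ^ 3 * y) * (x - y) ≥ (1 / 8) * |x - y| ^ 5 := by
  wlog hxy : y ≤ x with H
  · have h := H y x (le_of_not_ge hxy)
    rw [abs_sub_comm] at h
    nlinarith [h]
  have hd : (0:ℝ) ≤ x - y := by linarith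
  have habs : |x - y| = x - y := abs_of_nonneg hd
  rw [habs]
  rcases le_or_gt 0 y with hy | hy
  · have hx : 0 ≤ x := le_trans hy hxy
    rw [abs_of_nonneg hx, abs_of_nonneg hy]
    have h1 : (x - y) ^ 3 ≤ x ^ 3 := pow_le_pow_left₀ hd (by linarith) 3
    nlinarith [mul_nonneg (mul_nonneg hx hx) hy, mul_nonneg (mul_nonneg hx hy) hy,
      mul_nonneg (mul_nonneg hy hy) hy,
      mul_nonneg (mul_nonneg hd hd) (mul_nonneg hd hd),
      mul_le_mul_of_nonneg_left h1 hd]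
  · rcases le_or_gt 0 x with hx | hx
    · rw [abs_of_nonneg hx, abs_of_neg hy]
      nlinarith [sq_nonneg (x + y), sq_nonneg (x*x - y*y), sq_nonneg (x - y),
        mul_nonneg hx (le_of_lt (neg_pos.mpr hy)), sq_nonneg (x*y),
        sq_nonneg (x*x + y*y)]
    · rw [abs_of_neg hx, abs_of_neg hy]
      have h1 : (x - y) ^ 3 ≤ (-y) ^ 3 := pow_le_pow_left₀ hd (by linarith) 3
      have hx' : (0:ℝ) ≤ -x := by linarith
      have hy' : (0:ℝ) ≤ -y := by linarith
      have hd2 : (0:ℝ) ≤ (x - y) ^ 2 := sq_nonneg _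
      nlinarith [mul_nonneg hd2 (mul_nonneg (mul_nonneg hy' hy') hx'),
        mul_nonneg hd2 (mul_nonneg (mul_nonneg hy' hx') hx'),
        mul_nonneg hd2 (mul_nonneg (mul_nonneg hx' hx') hx'),
        mul_le_mul_of_nonneg_left h1 hd2]

theorem radiation_coercivity_about_background (ζ ω θ₀ : ℝ) (hζ : 0 < ζ) (hω : 0 ≤ ω)
    (hθ₀ : 0 < θ₀) (ξ : ℝ) :
    ((ζ * |ξ + θ₀| ^ 3 * (ξ + θ₀) + ω * (ξ + θ₀)) - (ζ * |θ₀| ^ 3 * θ₀ + ω * θ₀)) * ξ ≥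
      ζ / 8 * |ξ| ^ 5 + ω * ξ ^ 2 := by
  have h := key_mono (ξ + θ₀) θ₀
  have hsimp : ξ + θ₀ - θ₀ = ξ := by ring
  rw [hsimp] at h
  nlinarith [mul_le_mul_of_nonneg_left h (le_of_lt hζ)]
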